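/- Let d ≥ 1, let ε_1, …, ε_{d+1} ∈ {+1,−1}, and let t_1, …, t_d be positive real numbers such that t_{l₀} ≤ 1/2 or t_{l₀} ≥ 2 for at least one index l₀ ∈ {1,…,d}. Then ∑_{l=1}^d (ε_{d+1}·t_1⋯t_d − ε_l·t_l^{−1})² ≥ 1/16. -/
import Mathlib


/-- Lower bound `Θ(t; ε) ≥ 1/16` for
`Θ(t; ε) = ∑_l (ε_{d+1}·t_1⋯t_d − ε_l·t_l⁻¹)²` whenever some coordinate `t_{l₀}`
lies outside the interval `(1/2, 2)`. -/
theorem stmt_8 (d : ℕ) (hd : 1 ≤ d) (ε : Fin (d + 1) → ℝ)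
    (hε : ∀ l, ε l = 1 ∨ ε l = -1)
    (t : Fin d → ℝ) (ht : ∀ l, 0 < t l)
    (h : ∃ l₀ : Fin d, t l₀ ≤ 1 / 2 ∨ 2 ≤ t l₀) :
    1 / 16 ≤ ∑ l : Fin d, (ε (Fin.last d) * ∏ k, t k - ε l.castSucc * (t l)⁻¹) ^ 2 := by
  set Q : ℝ := ∏ k, t k with hQ
  have hQpos : 0 < Q := Finset.prod_pos (fun i _ => ht i)
  have key : ∀ l : Fin d,
      (Q - (t l)⁻¹) ^ 2 ≤ (ε (Fin.last d) * Q - ε l.castSucc * (t l)⁻¹) ^ 2 := by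
    intro l
    have hx : 0 < (t l)⁻¹ := inv_pos.2 (ht l)
    rcases hε (Fin.last d) with h1 | h1 <;> rcases hε l.castSucc with h2 | h2 <;>
      rw [h1, h2] <;> nlinarith [mul_pos hQpos hx]
  have step : (∑ l : Fin d, (Q - (t l)⁻¹) ^ 2) ≤
      ∑ l : Fin d, (ε (Fin.last d) * Q - ε l.castSucc * (t l)⁻¹) ^ 2 :=
    Finset.sum_le_sum fun l _ => key l
  refine le_trans ?_ step
  have single : ∀ k : Fin d, (Q - (t k)⁻¹) ^ 2 ≤ ∑ l : Fin d, (Q - (t l)⁻¹) ^ 2 :=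
    fun k => Finset.single_le_sum (f := fun l : Fin d => (Q - (t l)⁻¹) ^ 2)
      (fun i _ => sq_nonneg _) (Finset.mem_univ k)
  obtain ⟨l₀, hl₀ | hl₀⟩ := h
  · -- t l₀ ≤ 1/2, so (t l₀)⁻¹ ≥ 2
    have hx : 0 < (t l₀)⁻¹ := inv_pos.2 (ht l₀)
    have hinv : (2 : ℝ) ≤ (t l₀)⁻¹ := by
      have h3 : t l₀ * (t l₀)⁻¹ ≤ (1 / 2) * (t l₀)⁻¹ :=
        mul_le_mul_of_nonneg_right hl₀ hx.le
      rw [mul_inv_cancel₀ (ht l₀).ne'] at h3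
      linarith
    by_cases hQ7 : Q ≤ 7 / 4
    · refine le_trans ?_ (single l₀)
      nlinarith
    · push_neg at hQ7
      have hk : ∃ k : Fin d, 1 ≤ t k := by
        by_contra hcon
        push_neg at hcon
        have : Q ≤ 1 := Finset.prod_le_one (fun i _ => (ht i).le)
          (fun i _ => (hcon i).le)
        linarith
      obtain ⟨k, hk⟩ := hk
      have hxk : 0 < (t k)⁻¹ := inv_pos.2 (ht k)
      have hinvk : (t k)⁻¹ ≤ 1 := by
        have h3 : 1 * (t k)⁻¹ ≤ t k * (t k)⁻¹ :=
          mul_le_mul_of_nonneg_right hk hxk.le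
        rw [mul_inv_cancel₀ (ht k).ne'] at h3
        linarith
      refine le_trans ?_ (single k)
      nlinarith
  · -- 2 ≤ t l₀, so (t l₀)⁻¹ ≤ 1/2
    have hx : 0 < (t l₀)⁻¹ := inv_pos.2 (ht l₀)
    have hinv : (t l₀)⁻¹ ≤ 1 / 2 := by
      have h3 : 2 * (t l₀)⁻¹ ≤ t l₀ * (t l₀)⁻¹ :=
        mul_le_mul_of_nonneg_right hl₀ hx.le
      rw [mul_inv_cancel₀ (ht l₀).ne'] at h3
      linarith
    by_cases hQ3 : 3 / 4 ≤ Q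
    · refine le_trans ?_ (single l₀)
      nlinarith
    · push_neg at hQ3
      have hk : ∃ k : Fin d, t k ≤ 1 := by
        by_contra hcon
        push_neg at hcon
        have : (1 : ℝ) ≤ Q := by
          rw [hQ]
          calc (1 : ℝ) = ∏ _k : Fin d, (1 : ℝ) := by simp
            _ ≤ ∏ k, t k :=
              Finset.prod_le_prod (fun i _ => zero_le_one) (fun i _ => (hcon i).le)
        linarith
      obtain ⟨k, hk⟩ := hk
      have hxk : 0 < (t k)⁻¹ := inv_pos.2 (ht k)
      have hinvk : (1 : ℝ) ≤ (t k)⁻¹ := by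
        have h3 : t k * (t k)⁻¹ ≤ 1 * (t k)⁻¹ :=
          mul_le_mul_of_nonneg_right hk hxk.le
        rw [mul_inv_cancel₀ (ht k).ne'] at h3
        linarith
      refine le_trans ?_ (single k)
      nlinarith
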